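/- Kernel formula for Laguerre weight with a mass at 0 (formula (15)). For every n ≥ 0 and every x ∈ [0,∞), L_n(x,0) = r_n·Q_n(x), where r_n = L_n(0,0)/Q_n(0); that is, the function x ↦ L_n(x,0) is a scalar multiple of the n-th orthonormal polynomial Q_n relative to the measure e^{−x}x^{α+1}dx. -/
import Mathlib

open MeasureTheory Set Filter Polynomial
open scoped ENNReal NNReal

/-- Basis expansion: polynomials of distinct degrees span. -/
lemma aux_basis (R : ℕ → Polynomial ℝ) (hdeg : ∀ m, (R m).natDegree = m)
    (hlead : ∀ m, (R m).leadingCoeff ≠ 0) :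
    ∀ (n : ℕ) (p : Polynomial ℝ), p.natDegree ≤ n →
      ∃ c : ℕ → ℝ, p = ∑ m ∈ Finset.range (n + 1), Polynomial.C (c m) * R m := by
  intro n
  induction n with
  | zero =>
    intro p hp
    have hR0 : (R 0).coeff 0 ≠ 0 := by
      have := hlead 0
      rwa [Polynomial.leadingCoeff, hdeg 0] at this
    refine ⟨fun _ => p.coeff 0 / (R 0).coeff 0, ?_⟩
    have hp' : p = Polynomial.C (p.coeff 0) := Polynomial.eq_C_of_natDegree_le_zero hp
    have hR' : R 0 = Polynomial.C ((R 0).coeff 0) :=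
      Polynomial.eq_C_of_natDegree_le_zero (le_of_eq (hdeg 0))
    rw [Finset.sum_range_one]
    show p = Polynomial.C (p.coeff 0 / (R 0).coeff 0) * R 0
    calc p = Polynomial.C (p.coeff 0) := hp'
      _ = Polynomial.C (p.coeff 0 / (R 0).coeff 0) * Polynomial.C ((R 0).coeff 0) := by
            rw [← Polynomial.C_mul, div_mul_cancel₀ _ hR0]
      _ = Polynomial.C (p.coeff 0 / (R 0).coeff 0) * R 0 := by rw [← hR']
  | succ n ih =>
    intro p hp
    set c1 : ℝ := p.coeff (n + 1) / (R (n + 1)).coeff (n + 1) with hc1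
    have hRlead : (R (n+1)).coeff (n+1) ≠ 0 := by
      have := hlead (n+1)
      rwa [Polynomial.leadingCoeff, hdeg (n+1)] at this
    set p' : Polynomial ℝ := p - Polynomial.C c1 * R (n + 1) with hp'def
    have hdegp' : p'.natDegree ≤ n := by
      rw [Polynomial.natDegree_le_iff_coeff_eq_zero]
      intro N hN
      rcases eq_or_lt_of_le (Nat.succ_le_of_lt hN) with h | h
      · -- N = n+1
        rw [hp'def]
        simp only [Polynomial.coeff_sub, Polynomial.coeff_C_mul]
        rw [← h, hc1, div_mul_cancel₀ _ hRlead, sub_self]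
      · -- N > n+1
        have h1 : p.coeff N = 0 :=
          Polynomial.coeff_eq_zero_of_natDegree_lt (lt_of_le_of_lt hp h)
        have h2 : (Polynomial.C c1 * R (n+1)).coeff N = 0 := by
          apply Polynomial.coeff_eq_zero_of_natDegree_lt
          calc (Polynomial.C c1 * R (n+1)).natDegree ≤ (R (n+1)).natDegree :=
                Polynomial.natDegree_C_mul_le _ _
            _ = n + 1 := hdeg _
            _ < N := h
        rw [hp'def]
        simp [h1, h2]
    obtain ⟨c, hc⟩ := ih p' hdegp'
    refine ⟨fun m => if m = n + 1 then c1 else c m, ?_⟩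
    have : ∑ m ∈ Finset.range (n + 1), Polynomial.C (if m = n + 1 then c1 else c m) * R m
        = ∑ m ∈ Finset.range (n + 1), Polynomial.C (c m) * R m := by
      apply Finset.sum_congr rfl
      intro m hm
      have : m ≠ n + 1 := by
        have := Finset.mem_range.mp hm; omega
      rw [if_neg this]
    rw [Finset.sum_range_succ, this, ← hc]
    show p = p' + Polynomial.C (if n + 1 = n + 1 then c1 else c (n+1)) * R (n + 1)
    rw [if_pos rfl, hp'def]
    ring


lemma aux_int_mono (β : ℝ) (hβ : -1 < β) (k : ℕ) :
    IntegrableOn (fun x : ℝ => x ^ k * (Real.exp (-x) * x ^ β)) (Ici (0:ℝ)) := by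
  rw [integrableOn_Ici_iff_integrableOn_Ioi]
  have h0 : (0:ℝ) < β + k + 1 := by
    have : (0:ℝ) ≤ k := Nat.cast_nonneg k
    linarith
  have := Real.GammaIntegral_convergent h0
  apply this.congr_fun ?_ measurableSet_Ioi
  intro x hx
  have hx0 : (0:ℝ) < x := hx
  have : x ^ (β + ↑k + 1 - 1) = x ^ β * x ^ k := by
    rw [show β + ↑k + 1 - 1 = β + (k:ℝ) by ring, Real.rpow_add hx0, Real.rpow_natCast]
  simp only []
  rw [this]; ring

lemma aux_int_poly (β : ℝ) (hβ : -1 < β) (p : Polynomial ℝ) :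
    Integrable (fun x => p.eval x)
      ((volume.restrict (Ici (0:ℝ))).withDensity fun x =>
        ENNReal.ofReal (Real.exp (-x) * x ^ β)) := by
  have hmeas : Measurable fun x : ℝ => ENNReal.ofReal (Real.exp (-x) * x ^ β) := by fun_prop
  rw [integrable_withDensity_iff hmeas (ae_of_all _ fun x => ENNReal.ofReal_lt_top)]
  have h1 : ∀ᵐ x ∂(volume.restrict (Ici (0:ℝ))),
      (∑ i ∈ Finset.range (p.natDegree + 1), p.coeff i * (x ^ i * (Real.exp (-x) * x ^ β)))
        = p.eval x * (ENNReal.ofReal (Real.exp (-x) * x ^ β)).toReal := by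
    filter_upwards [ae_restrict_mem measurableSet_Ici] with x hx
    have hx0 : (0:ℝ) ≤ x := hx
    rw [ENNReal.toReal_ofReal (by positivity)]
    rw [Polynomial.eval_eq_sum_range, Finset.sum_mul]
    exact Finset.sum_congr rfl fun i _ => by ring
  refine Integrable.congr ?_ h1
  apply integrable_finset_sum
  intro i _
  exact (aux_int_mono β hβ i).const_mul _

lemma aux_shift (α : ℝ) (p : Polynomial ℝ) :
    ∫ x, p.eval x ∂((volume.restrict (Ici (0:ℝ))).withDensity fun x =>
        ENNReal.ofReal (Real.exp (-x) * x ^ (α+1)))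
      = ∫ x, p.eval x * x ∂((volume.restrict (Ici (0:ℝ))).withDensity fun x =>
        ENNReal.ofReal (Real.exp (-x) * x ^ α)) := by
  have hm1 : Measurable fun x : ℝ => (Real.exp (-x) * x ^ (α+1)).toNNReal := by fun_prop
  have hm2 : Measurable fun x : ℝ => (Real.exp (-x) * x ^ α).toNNReal := by fun_prop
  have e1 : (fun x : ℝ => ENNReal.ofReal (Real.exp (-x) * x ^ (α+1)))
      = fun x => ((Real.exp (-x) * x ^ (α+1)).toNNReal : ℝ≥0∞) := rfl
  have e2 : (fun x : ℝ => ENNReal.ofReal (Real.exp (-x) * x ^ α))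
      = fun x => ((Real.exp (-x) * x ^ α).toNNReal : ℝ≥0∞) := rfl
  rw [e1, e2, integral_withDensity_eq_integral_smul hm1, integral_withDensity_eq_integral_smul hm2]
  rw [Measure.restrict_congr_set (Ioi_ae_eq_Ici (a := (0:ℝ))).symm]
  apply integral_congr_ae
  filter_upwards [ae_restrict_mem measurableSet_Ioi] with x hx
  have hx0 : (0:ℝ) < x := hx
  have n1 : (0:ℝ) ≤ Real.exp (-x) * x ^ (α+1) := by positivity
  have n2 : (0:ℝ) ≤ Real.exp (-x) * x ^ α := by positivity
  simp only [NNReal.smul_def, NNReal.coe_mk, Real.coe_toNNReal _ n1, Real.coe_toNNReal _ n2,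
    smul_eq_mul]
  rw [Real.rpow_add_one hx0.ne']
  ring


open MeasureTheory Set Filter
open scoped ENNReal NNReal

/-- Formula (15): for the Laguerre weight with a positive mass at `0`, the kernel
`L_n(·,0)` is a scalar multiple of the `n`-th orthonormal polynomial `Q_n` relative to
`e^{-x}x^{α+1}dx`, namely `L_n(x,0) = (L_n(0,0)/Q_n(0))·Q_n(x)`. -/
theorem laguerre_kernel_formula
    -- Laguerre weight on [0,∞) with a positive mass at 0
    (α : ℝ) (hα : -1 < α) (M : ℝ) (hM : 0 < M)
    (μ : Measure ℝ)
    (hμ : μ = (volume.restrict (Ici (0 : ℝ))).withDensity fun x =>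
      ENNReal.ofReal (Real.exp (-x) * x ^ α))
    (ν : Measure ℝ) (hν : ν = μ + ENNReal.ofReal M • Measure.dirac 0)
    -- orthonormal polynomials for ν and the kernels L_n
    (P : ℕ → Polynomial ℝ)
    (hdeg : ∀ n, (P n).natDegree = n)
    (hlead : ∀ n, 0 < (P n).leadingCoeff)
    (horth : ∀ n m, ∫ x, (P n).eval x * (P m).eval x ∂ν = if n = m then 1 else 0)
    (L : ℕ → ℝ → ℝ → ℝ)
    (hL : ∀ n x y, L n x y = ∑ j ∈ Finset.range (n + 1), (P j).eval x * (P j).eval y)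
    -- orthonormal polynomials for the Laguerre weight e^{-x} x^{α+1}
    (μ1 : Measure ℝ)
    (hμ1 : μ1 = (volume.restrict (Ici (0 : ℝ))).withDensity fun x =>
      ENNReal.ofReal (Real.exp (-x) * x ^ (α + 1)))
    (Q : ℕ → Polynomial ℝ)
    (hQdeg : ∀ n, (Q n).natDegree = n)
    (hQlead : ∀ n, 0 < (Q n).leadingCoeff)
    (hQorth : ∀ n m, ∫ x, (Q n).eval x * (Q m).eval x ∂μ1 = if n = m then 1 else 0)
    :
    ∀ (n : ℕ), ∀ x ∈ Ici (0 : ℝ),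
      L n x 0 = L n 0 0 / (Q n).eval 0 * (Q n).eval x := by
  intro n
  -- integrability of polynomials with respect to the various measures
  have hint_μ : ∀ p : Polynomial ℝ, Integrable (fun x => p.eval x) μ := by
    intro p; rw [hμ]; exact aux_int_poly α hα p
  have hint_μ1 : ∀ p : Polynomial ℝ, Integrable (fun x => p.eval x) μ1 := by
    intro p; rw [hμ1]; exact aux_int_poly (α + 1) (by linarith) p
  have hint_d : ∀ p : Polynomial ℝ,
      Integrable (fun x => p.eval x) (ENNReal.ofReal M • Measure.dirac 0) := by
    intro p
    refine Integrable.smul_measure ?_ ENNReal.ofReal_ne_top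
    have h0 : (fun _ : ℝ => p.eval 0) =ᵐ[Measure.dirac (0:ℝ)] fun x => p.eval x := by
      rw [MeasureTheory.ae_dirac_eq]
      exact Filter.eventually_pure.2 rfl
    exact (integrable_const _).congr h0
  have hint_ν : ∀ p : Polynomial ℝ, Integrable (fun x => p.eval x) ν := by
    intro p; rw [hν]; exact (hint_μ p).add_measure (hint_d p)
  have hint_ν2 : ∀ a b : Polynomial ℝ, Integrable (fun x => a.eval x * b.eval x) ν := by
    intro a b; simpa [Polynomial.eval_mul] using hint_ν (a * b)
  have hint_μ12 : ∀ a b : Polynomial ℝ, Integrable (fun x => a.eval x * b.eval x) μ1 := by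
    intro a b; simpa [Polynomial.eval_mul] using hint_μ1 (a * b)
  -- splitting an integral over ν
  have hsplit : ∀ p : Polynomial ℝ,
      ∫ x, p.eval x ∂ν = (∫ x, p.eval x ∂μ) + M * p.eval 0 := by
    intro p
    rw [hν, integral_add_measure (hint_μ p) (hint_d p), integral_smul_measure,
      integral_dirac, ENNReal.toReal_ofReal hM.le, smul_eq_mul]
  -- the kernel as a polynomial
  set Rp : Polynomial ℝ := ∑ j ∈ Finset.range (n + 1), Polynomial.C ((P j).eval 0) * P j
    with hRp
  have hRe : ∀ x, Rp.eval x = L n x 0 := by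
    intro x
    rw [hL, hRp, Polynomial.eval_finset_sum]
    exact Finset.sum_congr rfl fun j _ => by
      rw [Polynomial.eval_mul, Polynomial.eval_C]; ring
  have hRdeg : Rp.natDegree ≤ n := by
    apply Polynomial.natDegree_sum_le_of_forall_le
    intro j hj
    exact le_trans (Polynomial.natDegree_C_mul_le _ _)
      (by rw [hdeg]; exact Nat.lt_succ_iff.mp (Finset.mem_range.mp hj))
  -- reproducing property of the kernel
  have key1 : ∀ p : Polynomial ℝ, p.natDegree ≤ n →
      ∫ x, Rp.eval x * p.eval x ∂ν = p.eval 0 := by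
    intro p hp
    obtain ⟨c, hc⟩ := aux_basis P hdeg (fun m => (hlead m).ne') n p hp
    have expand : ∀ x : ℝ, Rp.eval x * p.eval x
        = ∑ j ∈ Finset.range (n+1), ∑ m ∈ Finset.range (n+1),
            ((P j).eval 0 * c m) * ((P j).eval x * (P m).eval x) := by
      intro x
      rw [hc, hRp]
      simp only [Polynomial.eval_finset_sum, Polynomial.eval_mul, Polynomial.eval_C]
      rw [Finset.sum_mul_sum]
      exact Finset.sum_congr rfl fun j _ => Finset.sum_congr rfl fun m _ => by ring
    calc ∫ x, Rp.eval x * p.eval x ∂ν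
        = ∫ x, ∑ j ∈ Finset.range (n+1), ∑ m ∈ Finset.range (n+1),
            ((P j).eval 0 * c m) * ((P j).eval x * (P m).eval x) ∂ν :=
          integral_congr_ae (ae_of_all _ expand)
      _ = ∑ j ∈ Finset.range (n+1), ∑ m ∈ Finset.range (n+1),
            ((P j).eval 0 * c m) * ∫ x, (P j).eval x * (P m).eval x ∂ν := by
          rw [integral_finset_sum _ fun j _ =>
            integrable_finset_sum _ fun m _ => (hint_ν2 (P j) (P m)).const_mul _]
          exact Finset.sum_congr rfl fun j _ => by
            rw [integral_finset_sum _ fun m _ => (hint_ν2 (P j) (P m)).const_mul _]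
            exact Finset.sum_congr rfl fun m _ => integral_const_mul _ _
      _ = ∑ j ∈ Finset.range (n+1), (P j).eval 0 * c j := by
          simp only [horth, mul_ite, mul_one, mul_zero, Finset.sum_ite_eq, Finset.mem_range]
          exact Finset.sum_congr rfl fun j hj => by
            rw [if_pos (Finset.mem_range.mp hj)]
      _ = p.eval 0 := by
          rw [hc, Polynomial.eval_finset_sum]
          exact Finset.sum_congr rfl fun m _ => by
            rw [Polynomial.eval_mul, Polynomial.eval_C]; ring
  -- orthogonality of the kernel to lower-degree polynomials in μ1
  have key2 : ∀ m, m < n → ∫ x, Rp.eval x * (Q m).eval x ∂μ1 = 0 := by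
    intro m hm
    have hQm0 : Q m ≠ 0 := fun h => by simpa [h] using (hQlead m)
    have hdegXQ : (Polynomial.X * Q m).natDegree ≤ n := by
      rw [Polynomial.natDegree_mul Polynomial.X_ne_zero hQm0, Polynomial.natDegree_X, hQdeg]
      omega
    have h1 := key1 (Polynomial.X * Q m) hdegXQ
    have h2 := hsplit (Rp * (Polynomial.X * Q m))
    have e1 : ∫ x, (Rp * (Polynomial.X * Q m)).eval x ∂ν
        = ∫ x, Rp.eval x * (Polynomial.X * Q m).eval x ∂ν := by
      simp only [Polynomial.eval_mul]
    have heval0 : (Rp * (Polynomial.X * Q m)).eval 0 = 0 := by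
      simp [Polynomial.eval_mul]
    have h3 : ∫ x, (Rp * (Polynomial.X * Q m)).eval x ∂μ = 0 := by
      rw [e1, h1, heval0, mul_zero, add_zero] at h2
      have hz : (Polynomial.X * Q m).eval 0 = 0 := by simp
      rw [hz] at h2
      exact h2.symm
    have h4 := aux_shift α (Rp * Q m)
    rw [← hμ1, ← hμ] at h4
    have e2 : ∫ x, (Rp * Q m).eval x * x ∂μ
        = ∫ x, (Rp * (Polynomial.X * Q m)).eval x ∂μ := by
      refine integral_congr_ae (ae_of_all _ fun x => ?_)
      simp only [Polynomial.eval_mul, Polynomial.eval_X]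
      ring
    calc ∫ x, Rp.eval x * (Q m).eval x ∂μ1
        = ∫ x, (Rp * Q m).eval x ∂μ1 := by simp only [Polynomial.eval_mul]
      _ = 0 := by rw [h4, e2, h3]
  -- expand the kernel in the Q basis
  obtain ⟨d, hd⟩ := aux_basis Q hQdeg (fun m => (hQlead m).ne') n Rp hRdeg
  have key4 : ∀ m, m ∈ Finset.range (n+1) → ∫ x, Rp.eval x * (Q m).eval x ∂μ1 = d m := by
    intro m hm
    have expand : ∀ x : ℝ, Rp.eval x * (Q m).eval x
        = ∑ k ∈ Finset.range (n+1), d k * ((Q k).eval x * (Q m).eval x) := by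
      intro x
      conv_lhs => rw [hd]
      rw [Polynomial.eval_finset_sum, Finset.sum_mul]
      exact Finset.sum_congr rfl fun k _ => by
        rw [Polynomial.eval_mul, Polynomial.eval_C]; ring
    calc ∫ x, Rp.eval x * (Q m).eval x ∂μ1
        = ∫ x, ∑ k ∈ Finset.range (n+1), d k * ((Q k).eval x * (Q m).eval x) ∂μ1 :=
          integral_congr_ae (ae_of_all _ expand)
      _ = ∑ k ∈ Finset.range (n+1), d k * ∫ x, (Q k).eval x * (Q m).eval x ∂μ1 := by
          rw [integral_finset_sum _ fun k _ => (hint_μ12 (Q k) (Q m)).const_mul _]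
          exact Finset.sum_congr rfl fun k _ => integral_const_mul _ _
      _ = d m := by
          simp only [hQorth, mul_ite, mul_one, mul_zero, Finset.sum_ite_eq',
            Finset.mem_range]
          rw [if_pos (Finset.mem_range.mp hm)]
  have hdm0 : ∀ m, m < n → d m = 0 := fun m hm =>
    (key4 m (Finset.mem_range.mpr (by omega))).symm.trans (key2 m hm)
  have hR_eq : Rp = Polynomial.C (d n) * Q n := by
    rw [hd, Finset.sum_range_succ]
    have hz : ∑ m ∈ Finset.range n, Polynomial.C (d m) * Q m = 0 := by
      apply Finset.sum_eq_zero
      intro m hm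
      rw [hdm0 m (Finset.mem_range.mp hm)]
      simp
    rw [hz, zero_add]
  -- positivity of L n 0 0 and nonvanishing of Q n at 0
  have hP00 : (0:ℝ) < (P 0).eval 0 := by
    have h1 : P 0 = Polynomial.C ((P 0).coeff 0) :=
      Polynomial.eq_C_of_natDegree_le_zero (le_of_eq (hdeg 0))
    have h2 : (P 0).leadingCoeff = (P 0).coeff 0 := by
      rw [Polynomial.leadingCoeff, hdeg 0]
    have h3 := hlead 0
    rw [h2] at h3
    rw [h1]; simpa using h3
  have hpos : 0 < L n 0 0 := by
    rw [hL]
    apply Finset.sum_pos'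
    · intro j _; exact mul_self_nonneg _
    · exact ⟨0, Finset.mem_range.mpr (Nat.succ_pos n), mul_pos hP00 hP00⟩
  have hLd : L n 0 0 = d n * (Q n).eval 0 := by
    rw [← hRe 0, hR_eq, Polynomial.eval_mul, Polynomial.eval_C]
  have hQn0 : (Q n).eval 0 ≠ 0 := by
    intro h
    rw [h, mul_zero] at hLd
    linarith
  intro x _
  rw [← hRe x, hR_eq, Polynomial.eval_mul, Polynomial.eval_C, hLd,
    mul_div_assoc, div_self hQn0, mul_one]
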